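/- Under the hypotheses: σ(i,n−i)+σ(n−i,i) ≤ ψ(n) for all 1 ≤ i ≤ n−1 and n ≥ N, and there exists a differentiable non-negative ϑ : ℝ⁺ → ℝ with ϑ' increasing on [1,∞), e·ψ(x)·ϑ(x) ≤ ϑ'(x) for x ≥ N, and ϑ'(1) ≥ 1, the expected height satisfies E(H_{n,σ}) ≤ ln(ϑ'(n)) + N for all n ≥ 1. -/
import Mathlib


inductive BTree
  | leaf : BTree
  | node : BTree → BTree → BTree
deriving DecidableEq

def BTree.size : BTree → ℕ
  | .leaf => 1
  | .node l r => l.size + r.size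

def BTree.height : BTree → ℕ
  | .leaf => 0
  | .node l r => 1 + max l.height r.height

noncomputable def Pσ (σ : ℕ → ℕ → ℝ) : BTree → ℝ
  | .leaf => 1
  | .node l r => σ l.size r.size * Pσ σ l * Pσ σ r

def trees : ℕ → Finset BTree
  | 0 => ∅
  | 1 => {BTree.leaf}
  | (n+2) => (Finset.Ico 1 (n+2)).attach.biUnion
      (fun k => ((trees k.1) ×ˢ (trees (n+2-k.1))).image (fun p => BTree.node p.1 p.2))
  decreasing_by
  · exact (Finset.mem_Ico.mp k.2).2
  · have h := (Finset.mem_Ico.mp k.2).1; omega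

noncomputable def expPow (σ : ℕ → ℕ → ℝ) (φ : ℝ) (n : ℕ) : ℝ :=
  ∑ t ∈ trees n, Pσ σ t * φ ^ t.height

noncomputable def expH (σ : ℕ → ℕ → ℝ) (n : ℕ) : ℝ :=
  ∑ t ∈ trees n, Pσ σ t * (t.height : ℝ)

lemma size_pos (t : BTree) : 1 ≤ t.size := by
  induction t with
  | leaf => exact le_refl 1
  | node l r hl hr => simp only [BTree.size]; omega

lemma height_lt_size (t : BTree) : t.height < t.size := by
  induction t with
  | leaf => simp [BTree.height, BTree.size]
  | node l r hl hr =>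
      simp only [BTree.height, BTree.size]
      omega

lemma mem_trees_size : ∀ n, ∀ t ∈ trees n, t.size = n := by
  intro n
  induction n using Nat.strong_induction_on with
  | _ n ih =>
    match n with
    | 0 => simp [trees]
    | 1 => intro t ht; simp [trees] at ht; simp [ht, BTree.size]
    | (m+2) =>
      intro t ht
      rw [trees] at ht
      simp only [Finset.mem_biUnion, Finset.mem_image, Finset.mem_product] at ht
      obtain ⟨k, -, ⟨l, r⟩, ⟨hl, hr⟩, rfl⟩ := ht
      have hk := Finset.mem_Ico.mp k.2
      have h1 := ih k.1 (by omega) l hl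
      have h2 := ih (m+2-k.1) (by omega) r hr
      simp [BTree.size, h1, h2]; omega

lemma sum_trees_rec {M : Type*} [AddCommMonoid M] (f : BTree → M) (m : ℕ) :
    ∑ t ∈ trees (m+2), f t
      = ∑ k ∈ Finset.Ico 1 (m+2), ∑ l ∈ trees k, ∑ r ∈ trees (m+2-k), f (.node l r) := by
  rw [trees]
  rw [Finset.sum_biUnion]
  · rw [← Finset.sum_attach (Finset.Ico 1 (m+2))
      (fun k => ∑ l ∈ trees k, ∑ r ∈ trees (m+2-k), f (.node l r))]
    refine Finset.sum_congr rfl ?_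
    intro k _
    rw [Finset.sum_image]
    · rw [Finset.sum_product]
    · rintro ⟨a, b⟩ hab ⟨c, d⟩ hcd h
      simpa using h
  · rintro ⟨k, hk⟩ - ⟨k2, hk2⟩ - hne
    simp only [Function.onFun]
    apply Finset.disjoint_left.mpr
    intro t ht ht'
    simp only [Finset.mem_image, Finset.mem_product, Prod.exists] at ht ht'
    obtain ⟨l, r, ⟨hl, -⟩, rfl⟩ := ht
    obtain ⟨l2, r2, ⟨hl2, -⟩, heq⟩ := ht'
    have hlr : l2 = l ∧ r2 = r := by
      injection heq with e1 e2; exact ⟨e1, e2⟩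
    have h1 := mem_trees_size k l hl
    have h2 := mem_trees_size k2 l2 hl2
    rw [hlr.1, h1] at h2
    exact hne (Subtype.ext h2)

lemma Pσ_nonneg (σ : ℕ → ℕ → ℝ) (hrange : ∀ i j, 0 ≤ σ i j ∧ σ i j ≤ 1) :
    ∀ t, 0 ≤ Pσ σ t := by
  intro t
  induction t with
  | leaf => simp [Pσ]
  | node l r hl hr =>
      simp only [Pσ]
      exact mul_nonneg (mul_nonneg (hrange _ _).1 hl) hr

lemma double_sum_mul (a b : Finset BTree) (c : ℝ) (f g : BTree → ℝ) :
    ∑ l ∈ a, ∑ r ∈ b, c * f l * g r = c * (∑ l ∈ a, f l) * (∑ r ∈ b, g r) := by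
  calc ∑ l ∈ a, ∑ r ∈ b, c * f l * g r
      = ∑ l ∈ a, (c * f l) * ∑ r ∈ b, g r :=
        Finset.sum_congr rfl fun l _ => by rw [Finset.mul_sum]
    _ = c * (∑ l ∈ a, f l) * ∑ r ∈ b, g r := by rw [← Finset.sum_mul, ← Finset.mul_sum]

lemma sum_Pσ (σ : ℕ → ℕ → ℝ)
    (hsum : ∀ k, 2 ≤ k → ∑ i ∈ Finset.Ico 1 k, σ i (k - i) = 1) :
    ∀ n, 1 ≤ n → ∑ t ∈ trees n, Pσ σ t = 1 := by
  intro n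
  induction n using Nat.strong_induction_on with
  | _ n ih =>
    match n with
    | 0 => intro h; exact absurd h (by norm_num)
    | 1 => intro _; simp [trees, Pσ]
    | (m+2) =>
      intro _
      rw [sum_trees_rec]
      have key : ∀ k ∈ Finset.Ico 1 (m+2),
          ∑ l ∈ trees k, ∑ r ∈ trees (m+2-k), Pσ σ (BTree.node l r) = σ k (m+2-k) := by
        intro k hk
        have hk' := Finset.mem_Ico.mp hk
        have e1 : ∑ l ∈ trees k, ∑ r ∈ trees (m+2-k), Pσ σ (BTree.node l r)
            = ∑ l ∈ trees k, ∑ r ∈ trees (m+2-k), σ k (m+2-k) * Pσ σ l * Pσ σ r := by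
          refine Finset.sum_congr rfl fun l hl => Finset.sum_congr rfl fun r hr => ?_
          rw [Pσ, mem_trees_size k l hl, mem_trees_size _ r hr]
        rw [e1, double_sum_mul, ih k (by omega) hk'.1,
          ih (m+2-k) (by omega) (by omega), mul_one, mul_one]
      rw [Finset.sum_congr rfl key, hsum (m+2) (by omega)]

lemma expPow_rec (σ : ℕ → ℕ → ℝ)
    (hrange : ∀ i j, 0 ≤ σ i j ∧ σ i j ≤ 1)
    (hsum : ∀ k, 2 ≤ k → ∑ i ∈ Finset.Ico 1 k, σ i (k - i) = 1) (m : ℕ) :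
    expPow σ (Real.exp 1) (m+2)
      ≤ Real.exp 1 * ∑ k ∈ Finset.Ico 1 (m+2),
          σ k (m+2-k) * (expPow σ (Real.exp 1) k + expPow σ (Real.exp 1) (m+2-k)) := by
  set e := Real.exp 1 with he
  have he1 : (1:ℝ) ≤ e := by
    have := Real.add_one_le_exp 1; rw [he]; linarith
  have he0 : (0:ℝ) ≤ e := by linarith
  rw [expPow, sum_trees_rec, Finset.mul_sum]
  apply Finset.sum_le_sum
  intro k hk
  have hk' := Finset.mem_Ico.mp hk
  set m' := m + 2 - k with hm'
  have hS1 : ∑ l ∈ trees k, Pσ σ l = 1 := sum_Pσ σ hsum k hk'.1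
  have hS2 : ∑ r ∈ trees m', Pσ σ r = 1 := sum_Pσ σ hsum m' (by omega)
  have step : ∀ l ∈ trees k, ∀ r ∈ trees m',
      Pσ σ (BTree.node l r) * e ^ (BTree.node l r).height
        ≤ e * (σ k m' * (Pσ σ l * e ^ l.height) * Pσ σ r
             + σ k m' * Pσ σ l * (Pσ σ r * e ^ r.height)) := by
    intro l hl r hr
    have hPl := Pσ_nonneg σ hrange l
    have hPr := Pσ_nonneg σ hrange r
    have hσ := (hrange k m').1
    have hmax : e ^ (max l.height r.height) ≤ e ^ l.height + e ^ r.height := by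
      rcases le_total l.height r.height with h | h
      · rw [max_eq_right h]
        exact le_add_of_nonneg_left (pow_nonneg he0 _)
      · rw [max_eq_left h]
        exact le_add_of_nonneg_right (pow_nonneg he0 _)
    have hP : Pσ σ (BTree.node l r) = σ k m' * Pσ σ l * Pσ σ r := by
      rw [Pσ, mem_trees_size k l hl, mem_trees_size m' r hr]
    have hh : e ^ (BTree.node l r).height = e * e ^ (max l.height r.height) := by
      simp only [BTree.height]
      rw [pow_add, pow_one]
    rw [hP, hh]
    calc σ k m' * Pσ σ l * Pσ σ r * (e * e ^ max l.height r.height)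
        ≤ σ k m' * Pσ σ l * Pσ σ r * (e * (e ^ l.height + e ^ r.height)) := by
          apply mul_le_mul_of_nonneg_left
          · exact mul_le_mul_of_nonneg_left hmax he0
          · exact mul_nonneg (mul_nonneg hσ hPl) hPr
      _ = e * (σ k m' * (Pσ σ l * e ^ l.height) * Pσ σ r
             + σ k m' * Pσ σ l * (Pσ σ r * e ^ r.height)) := by ring
  have h1 : ∑ l ∈ trees k, ∑ r ∈ trees m', σ k m' * (Pσ σ l * e ^ l.height) * Pσ σ r
      = σ k m' * expPow σ e k := by
    rw [double_sum_mul, hS2, mul_one, expPow]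
  have h2 : ∑ l ∈ trees k, ∑ r ∈ trees m', σ k m' * Pσ σ l * (Pσ σ r * e ^ r.height)
      = σ k m' * expPow σ e m' := by
    rw [double_sum_mul, hS1, expPow]; ring
  calc ∑ l ∈ trees k, ∑ r ∈ trees m', Pσ σ (BTree.node l r) * e ^ (BTree.node l r).height
      ≤ ∑ l ∈ trees k, ∑ r ∈ trees m',
          e * (σ k m' * (Pσ σ l * e ^ l.height) * Pσ σ r
             + σ k m' * Pσ σ l * (Pσ σ r * e ^ r.height)) :=
        Finset.sum_le_sum fun l hl => Finset.sum_le_sum fun r hr => step l hl r hr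
    _ = e * (σ k m' * (expPow σ e k + expPow σ e m')) := by
        rw [mul_add (σ k m'), ← h1, ← h2]
        simp only [mul_add, Finset.mul_sum, Finset.sum_add_distrib]

lemma sum_reindex (f : ℕ → ℕ → ℝ) (n : ℕ) (hn : 2 ≤ n) :
    ∑ k ∈ Finset.Ico 1 n, f k (n - k) = ∑ k ∈ Finset.Ico 1 n, f (n - k) k := by
  apply Finset.sum_nbij' (fun k => n - k) (fun k => n - k)
  all_goals intros; simp_all [Finset.mem_Ico]; try omega
  · congr 1; omega

lemma one_le_expPow (σ : ℕ → ℕ → ℝ)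
    (hrange : ∀ i j, 0 ≤ σ i j ∧ σ i j ≤ 1)
    (hsum : ∀ k, 2 ≤ k → ∑ i ∈ Finset.Ico 1 k, σ i (k - i) = 1)
    (n : ℕ) (hn : 1 ≤ n) : 1 ≤ expPow σ (Real.exp 1) n := by
  have he1 : (1:ℝ) ≤ Real.exp 1 := by have := Real.add_one_le_exp 1; linarith
  calc (1:ℝ) = ∑ t ∈ trees n, Pσ σ t := (sum_Pσ σ hsum n hn).symm
    _ ≤ ∑ t ∈ trees n, Pσ σ t * Real.exp 1 ^ t.height := by
        apply Finset.sum_le_sum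
        intro t ht
        have h1 : (1:ℝ) ≤ Real.exp 1 ^ t.height := one_le_pow₀ he1
        nlinarith [Pσ_nonneg σ hrange t]
    _ = expPow σ (Real.exp 1) n := rfl

lemma expPow_nonneg (σ : ℕ → ℕ → ℝ)
    (hrange : ∀ i j, 0 ≤ σ i j ∧ σ i j ≤ 1) (φ : ℝ) (hφ : 0 ≤ φ) (n : ℕ) :
    0 ≤ expPow σ φ n :=
  Finset.sum_nonneg fun t _ => mul_nonneg (Pσ_nonneg σ hrange t) (pow_nonneg hφ _)

lemma expPow_le_pow (σ : ℕ → ℕ → ℝ)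
    (hrange : ∀ i j, 0 ≤ σ i j ∧ σ i j ≤ 1)
    (hsum : ∀ k, 2 ≤ k → ∑ i ∈ Finset.Ico 1 k, σ i (k - i) = 1)
    (n : ℕ) (hn : 1 ≤ n) : expPow σ (Real.exp 1) n ≤ Real.exp 1 ^ (n - 1) := by
  have he1 : (1:ℝ) ≤ Real.exp 1 := by have := Real.add_one_le_exp 1; linarith
  calc expPow σ (Real.exp 1) n
      ≤ ∑ t ∈ trees n, Pσ σ t * Real.exp 1 ^ (n - 1) := by
        apply Finset.sum_le_sum
        intro t ht
        have hht : t.height ≤ n - 1 := by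
          have := height_lt_size t
          have := mem_trees_size n t ht
          omega
        exact mul_le_mul_of_nonneg_left (pow_le_pow_right₀ he1 hht) (Pσ_nonneg σ hrange t)
    _ = Real.exp 1 ^ (n - 1) := by
        rw [← Finset.sum_mul, sum_Pσ σ hsum n hn, one_mul]

lemma sum_deriv_le (ϑ : ℝ → ℝ)
    (hdiff : ∀ x : ℝ, 0 < x → DifferentiableAt ℝ ϑ x)
    (hmono : MonotoneOn (deriv ϑ) (Set.Ici (1 : ℝ)))
    (n : ℕ) (hn : 1 ≤ n) :
    ∑ i ∈ Finset.Ico 1 n, deriv ϑ (i:ℝ) ≤ ϑ n - ϑ 1 := by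
  have key : ∀ i : ℕ, 1 ≤ i → deriv ϑ (i:ℝ) ≤ ϑ ((i:ℝ)+1) - ϑ (i:ℝ) := by
    intro i hi
    have hi1 : (1:ℝ) ≤ (i:ℝ) := by exact_mod_cast hi
    obtain ⟨c, hc, hceq⟩ := exists_deriv_eq_slope ϑ (show (i:ℝ) < (i:ℝ)+1 by linarith)
      (fun x hx => (hdiff x (by simp only [Set.mem_Icc] at hx; linarith)).continuousAt.continuousWithinAt)
      (fun x hx => (hdiff x (by simp only [Set.mem_Ioo] at hx; linarith)).differentiableWithinAt)
    simp only [Set.mem_Ioo] at hc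
    have hle : deriv ϑ (i:ℝ) ≤ deriv ϑ c :=
      hmono (Set.mem_Ici.mpr hi1) (Set.mem_Ici.mpr (by linarith)) (le_of_lt hc.1)
    rw [hceq] at hle
    have : (i:ℝ) + 1 - i = 1 := by ring
    rw [this, div_one] at hle
    linarith
  calc ∑ i ∈ Finset.Ico 1 n, deriv ϑ (i:ℝ)
      ≤ ∑ i ∈ Finset.Ico 1 n, (ϑ ((i:ℝ)+1) - ϑ (i:ℝ)) := by
        apply Finset.sum_le_sum
        intro i hi
        exact key i (Finset.mem_Ico.mp hi).1
    _ = ϑ n - ϑ 1 := by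
        rw [Finset.sum_Ico_eq_sum_range]
        have e2 : ∑ j ∈ Finset.range (n-1), (ϑ (((1+j : ℕ):ℝ)+1) - ϑ ((1+j : ℕ):ℝ))
            = ∑ j ∈ Finset.range (n-1), (ϑ ((j:ℝ)+1+1) - ϑ ((j:ℝ)+1)) := by
          refine Finset.sum_congr rfl fun j _ => ?_
          push_cast; ring_nf
        have h' : ∑ j ∈ Finset.range (n-1), (ϑ ((j:ℝ)+1+1) - ϑ ((j:ℝ)+1))
            = ϑ (((n-1 : ℕ):ℝ)+1) - ϑ ((0:ℝ)+1) := by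
          simpa using Finset.sum_range_sub (fun j : ℕ => ϑ ((j:ℝ)+1)) (n - 1)
        have e3 : ((n-1 : ℕ):ℝ) + 1 = (n:ℝ) := by
          rw [Nat.cast_sub hn]; push_cast; ring
        rw [e2, h', e3]
        norm_num

lemma Z_bound (σ : ℕ → ℕ → ℝ)
    (hrange : ∀ i j, 0 ≤ σ i j ∧ σ i j ≤ 1)
    (hsum : ∀ k, 2 ≤ k → ∑ i ∈ Finset.Ico 1 k, σ i (k - i) = 1)
    (ψ : ℝ → ℝ) (hψrange : ∀ x, 0 < ψ x ∧ ψ x ≤ 1)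
    (N : ℕ)
    (hub : ∀ n : ℕ, N ≤ n → ∀ i : ℕ, 1 ≤ i → i ≤ n - 1 →
      σ i (n - i) + σ (n - i) i ≤ ψ n)
    (ϑ : ℝ → ℝ)
    (hdiff : ∀ x : ℝ, 0 < x → DifferentiableAt ℝ ϑ x)
    (hnonneg : ∀ x : ℝ, 0 < x → 0 ≤ ϑ x)
    (hmono : MonotoneOn (deriv ϑ) (Set.Ici (1 : ℝ)))
    (hineq : ∀ x : ℝ, (N : ℝ) ≤ x → Real.exp 1 * ψ x * ϑ x ≤ deriv ϑ x)
    (hinit : 1 ≤ deriv ϑ 1) :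
    ∀ n : ℕ, 1 ≤ n → expPow σ (Real.exp 1) n ≤ Real.exp 1 ^ N * deriv ϑ n := by
  have he1 : (1:ℝ) ≤ Real.exp 1 := by have := Real.add_one_le_exp 1; linarith
  have he0 : (0:ℝ) ≤ Real.exp 1 := by linarith
  have hd1 : ∀ x : ℝ, 1 ≤ x → 1 ≤ deriv ϑ x := fun x hx =>
    le_trans hinit (hmono (Set.mem_Ici.mpr le_rfl) (Set.mem_Ici.mpr hx) hx)
  intro n
  induction n using Nat.strong_induction_on with
  | _ n ih =>
    intro hn1
    by_cases hcase : 2 ≤ n ∧ N ≤ n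
    · obtain ⟨hn2, hnN⟩ := hcase
      obtain ⟨m, rfl⟩ : ∃ m, n = m + 2 := ⟨n - 2, by omega⟩
      set n := m + 2 with hn
      have hψn := hψrange (n : ℝ)
      have hZnn : ∀ k ∈ Finset.Ico 1 n, (0:ℝ) ≤ expPow σ (Real.exp 1) k :=
        fun k _ => expPow_nonneg σ hrange _ he0 k
      calc expPow σ (Real.exp 1) n
          ≤ Real.exp 1 * ∑ k ∈ Finset.Ico 1 n,
              σ k (n-k) * (expPow σ (Real.exp 1) k + expPow σ (Real.exp 1) (n-k)) :=
            expPow_rec σ hrange hsum m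
        _ = Real.exp 1 * (∑ k ∈ Finset.Ico 1 n, σ k (n-k) * expPow σ (Real.exp 1) k
             + ∑ k ∈ Finset.Ico 1 n, σ k (n-k) * expPow σ (Real.exp 1) (n-k)) := by
            rw [← Finset.sum_add_distrib]
            congr 1
            exact Finset.sum_congr rfl fun k _ => by ring
        _ = Real.exp 1 * ∑ k ∈ Finset.Ico 1 n,
              (σ k (n-k) + σ (n-k) k) * expPow σ (Real.exp 1) k := by
            rw [sum_reindex (fun a b => σ a b * expPow σ (Real.exp 1) b) n hn2,
              ← Finset.sum_add_distrib]
            congr 1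
            exact Finset.sum_congr rfl fun k _ => by ring
        _ ≤ Real.exp 1 * ∑ k ∈ Finset.Ico 1 n, ψ n * expPow σ (Real.exp 1) k := by
            apply mul_le_mul_of_nonneg_left _ he0
            apply Finset.sum_le_sum
            intro k hk
            have hk' := Finset.mem_Ico.mp hk
            exact mul_le_mul_of_nonneg_right
              (hub n hnN k hk'.1 (by omega)) (hZnn k hk)
        _ ≤ Real.exp 1 * ∑ k ∈ Finset.Ico 1 n, ψ n * (Real.exp 1 ^ N * deriv ϑ k) := by
            apply mul_le_mul_of_nonneg_left _ he0
            apply Finset.sum_le_sum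
            intro k hk
            have hk' := Finset.mem_Ico.mp hk
            exact mul_le_mul_of_nonneg_left (ih k (by omega) hk'.1) (le_of_lt hψn.1)
        _ = Real.exp 1 * ψ n * Real.exp 1 ^ N * ∑ k ∈ Finset.Ico 1 n, deriv ϑ (k:ℝ) := by
            rw [Finset.mul_sum, Finset.mul_sum]
            exact Finset.sum_congr rfl fun k _ => by ring
        _ ≤ Real.exp 1 * ψ n * Real.exp 1 ^ N * (ϑ n - ϑ 1) := by
            apply mul_le_mul_of_nonneg_left (sum_deriv_le ϑ hdiff hmono n hn1)
            exact mul_nonneg (mul_nonneg he0 (le_of_lt hψn.1)) (pow_nonneg he0 N)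
        _ ≤ Real.exp 1 ^ N * (Real.exp 1 * ψ n * ϑ n) := by
            have h01 : 0 ≤ ϑ 1 := hnonneg 1 one_pos
            have hf : 0 ≤ Real.exp 1 * ψ (n:ℝ) * Real.exp 1 ^ N :=
              mul_nonneg (mul_nonneg he0 (le_of_lt hψn.1)) (pow_nonneg he0 N)
            nlinarith
        _ ≤ Real.exp 1 ^ N * deriv ϑ n := by
            apply mul_le_mul_of_nonneg_left _ (pow_nonneg he0 N)
            exact hineq n (by exact_mod_cast hnN)
    · have hA : expPow σ (Real.exp 1) n ≤ Real.exp 1 ^ (n - 1) :=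
        expPow_le_pow σ hrange hsum n hn1
      have hB : Real.exp 1 ^ (n - 1) ≤ Real.exp 1 ^ N := by
        apply pow_le_pow_right₀ he1
        omega
      have hC : 1 ≤ deriv ϑ (n:ℝ) := hd1 n (by exact_mod_cast hn1)
      calc expPow σ (Real.exp 1) n ≤ Real.exp 1 ^ N := le_trans hA hB
        _ = Real.exp 1 ^ N * 1 := by ring
        _ ≤ Real.exp 1 ^ N * deriv ϑ n :=
            mul_le_mul_of_nonneg_left hC (pow_nonneg he0 N)

theorem upper_bounded_expected_height (σ : ℕ → ℕ → ℝ)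
    (hrange : ∀ i j, 0 ≤ σ i j ∧ σ i j ≤ 1)
    (hsum : ∀ k, 2 ≤ k → ∑ i ∈ Finset.Ico 1 k, σ i (k - i) = 1)
    (ψ : ℝ → ℝ) (hψdec : Antitone ψ) (hψrange : ∀ x, 0 < ψ x ∧ ψ x ≤ 1)
    (N : ℕ)
    (hub : ∀ n : ℕ, N ≤ n → ∀ i : ℕ, 1 ≤ i → i ≤ n - 1 →
      σ i (n - i) + σ (n - i) i ≤ ψ n)
    (ϑ : ℝ → ℝ)
    (hdiff : ∀ x : ℝ, 0 < x → DifferentiableAt ℝ ϑ x)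
    (hnonneg : ∀ x : ℝ, 0 < x → 0 ≤ ϑ x)
    (hmono : MonotoneOn (deriv ϑ) (Set.Ici (1 : ℝ)))
    (hineq : ∀ x : ℝ, (N : ℝ) ≤ x → Real.exp 1 * ψ x * ϑ x ≤ deriv ϑ x)
    (hinit : 1 ≤ deriv ϑ 1) :
    ∀ n : ℕ, 1 ≤ n →
      expH σ n ≤ Real.log (deriv ϑ n) + N := by
  intro n hn
  have he1 : (1:ℝ) ≤ Real.exp 1 := by have := Real.add_one_le_exp 1; linarith
  have hd1 : 1 ≤ deriv ϑ (n:ℝ) :=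
    le_trans hinit (hmono (Set.mem_Ici.mpr le_rfl)
      (Set.mem_Ici.mpr (by exact_mod_cast hn)) (by exact_mod_cast hn))
  have hprob := sum_Pσ σ hsum n hn
  have hw : ∀ t ∈ trees n, 0 ≤ Pσ σ t := fun t _ => Pσ_nonneg σ hrange t
  have hp : ∀ t ∈ trees n, (Real.exp 1 ^ t.height : ℝ) ∈ Set.Ioi (0:ℝ) :=
    fun t _ => pow_pos (Real.exp_pos 1) _
  have jensen := (strictConcaveOn_log_Ioi.concaveOn).le_map_sum hw hprob hp
  have hlog : ∀ t : BTree, Real.log (Real.exp 1 ^ t.height) = (t.height : ℝ) := by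
    intro t; rw [Real.log_pow, Real.log_exp, mul_one]
  have hZ1 : (1:ℝ) ≤ expPow σ (Real.exp 1) n := one_le_expPow σ hrange hsum n hn
  have hZb := Z_bound σ hrange hsum ψ hψrange N hub ϑ hdiff hnonneg hmono hineq hinit n hn
  calc expH σ n
      = ∑ t ∈ trees n, Pσ σ t • Real.log (Real.exp 1 ^ t.height) := by
        rw [expH]
        exact Finset.sum_congr rfl fun t _ => by rw [hlog, smul_eq_mul]
    _ ≤ Real.log (∑ t ∈ trees n, Pσ σ t • (Real.exp 1 ^ t.height)) := jensen
    _ = Real.log (expPow σ (Real.exp 1) n) := by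
        rw [expPow]
        congr 1
    _ ≤ Real.log (Real.exp 1 ^ N * deriv ϑ n) :=
        Real.log_le_log (by linarith) hZb
    _ = Real.log (deriv ϑ n) + N := by
        rw [Real.log_mul (by positivity) (by linarith), Real.log_pow, Real.log_exp]
        ring
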